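/- Assume R is irreducible. Let A be a subgroup of GL(V) mapping R into itself (hence preserving both Q and P), and assume that A contains a Coxeter element c of W and that the cyclic subgroup generated by c is normal in A. Then the homomorphism H^1(A, Q) → H^1(A, P) induced by the A-equivariant inclusion Q ↪ P is the zero map. -/

import Mathlib

open Module

/-- A finite, reduced, crystallographic root system spanning the `ℚ`-vector space `V`,
given together with its coroots (viewed as linear functionals via the pairing
`⟨·, α^∨⟩`). -/
structure RootSystemData (V : Type*) [AddCommGroup V] [Module ℚ V] where
  /-- The set of roots `R ⊆ V`. -/
  roots : Set V
  finite : roots.Finite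
  zero_not_mem : (0 : V) ∉ roots
  span_eq_top : Submodule.span ℚ roots = ⊤
  /-- The coroot pairing `x ↦ ⟨x, α^∨⟩`. -/
  coroot : V → (V →ₗ[ℚ] ℚ)
  coroot_self : ∀ α ∈ roots, coroot α α = 2
  /-- Each reflection `s_α : x ↦ x - ⟨x, α^∨⟩α` maps `R` into itself. -/
  reflection_mem : ∀ α ∈ roots, ∀ β ∈ roots, β - coroot α β • α ∈ roots
  /-- Crystallographic condition: `⟨β, α^∨⟩ ∈ ℤ` for all roots `α, β`. -/
  crystallographic : ∀ α ∈ roots, ∀ β ∈ roots, ∃ n : ℤ, coroot α β = (n : ℚ)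
  /-- Reduced: the only multiples of a root `α` which are roots are `±α`. -/
  reduced : ∀ α ∈ roots, ∀ t : ℚ, t • α ∈ roots → t = 1 ∨ t = -1

namespace RootSystemData

variable {V : Type*} [AddCommGroup V] [Module ℚ V] (RS : RootSystemData V)

/-- The reflection `s_α` in a root `α`, as a linear endomorphism of `V`. -/
def reflMap (α : V) : V →ₗ[ℚ] V :=
  LinearMap.id - LinearMap.smulRight (RS.coroot α) α

lemma reflMap_apply (α x : V) : RS.reflMap α x = x - RS.coroot α x • α := rfl

lemma reflMap_reflMap {α : V} (h2 : RS.coroot α α = 2) (x : V) :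
    RS.reflMap α (RS.reflMap α x) = x := by
  rw [reflMap_apply, reflMap_apply, map_sub, map_smul, smul_eq_mul, h2, sub_smul, mul_smul]
  have : (2 : ℚ) • α = α + α := two_smul ℚ α
  rw [this]
  rw [smul_add]
  abel

/-- The reflection `s_α` in a root `α`, as a linear automorphism of `V`. -/
def refl (α : V) (hα : α ∈ RS.roots) : V ≃ₗ[ℚ] V :=
  LinearEquiv.ofLinear (RS.reflMap α) (RS.reflMap α)
    (by ext x; exact RS.reflMap_reflMap (RS.coroot_self α hα) x)
    (by ext x; exact RS.reflMap_reflMap (RS.coroot_self α hα) x)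

/-- The Weyl group of the root system: the subgroup of `GL(V)` generated by the
reflections in the roots. -/
def weylGroup : Subgroup (V ≃ₗ[ℚ] V) :=
  Subgroup.closure {w | ∃ (α : V) (hα : α ∈ RS.roots), w = RS.refl α hα}

/-- A base (system of simple roots) of the root system: a linearly independent spanning
subset of `R` such that every root is a linear combination of base elements with integer
coefficients which are either all nonnegative or all nonpositive. -/
structure IsBase (Δ : Finset V) : Prop where
  subset : ↑Δ ⊆ RS.roots
  indep : LinearIndependent ℚ (fun x : (Δ : Set V) => (x : V))
  span_eq_top : Submodule.span ℚ (Δ : Set V) = ⊤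
  pos_or_neg : ∀ β ∈ RS.roots,
    (∃ f : V → ℕ, β = ∑ α ∈ Δ, (f α : ℚ) • α) ∨
    (∃ f : V → ℕ, β = -∑ α ∈ Δ, (f α : ℚ) • α)

/-- A Coxeter element of the Weyl group: a product of the reflections in the simple roots
of some base, each simple root occurring exactly once, in some order. -/
def IsCoxeterElement (c : V ≃ₗ[ℚ] V) : Prop :=
  ∃ (Δ : Finset V) (hΔ : RS.IsBase Δ) (l : List {x // x ∈ Δ}),
    l.Nodup ∧ (∀ α : {x // x ∈ Δ}, α ∈ l) ∧
    c = (l.map fun α => RS.refl α.1 (hΔ.subset α.2)).prod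

/-- Irreducibility of the root system: `R` admits no decomposition into two nonempty
mutually orthogonal subsets (orthogonality expressed via the coroot pairing). -/
def IsIrreducible : Prop :=
  ∀ R₁ R₂ : Set V, R₁ ∪ R₂ = RS.roots →
    (∀ α ∈ R₁, ∀ β ∈ R₂, RS.coroot α β = 0) → R₁ = ∅ ∨ R₂ = ∅

/-- The root lattice `Q`: the subgroup of `V` generated by the roots. -/
def rootLattice : AddSubgroup V := AddSubgroup.closure RS.roots

/-- The weight lattice `P = {x ∈ V : ⟨x, α^∨⟩ ∈ ℤ for every root α}`. -/
def weightLattice : AddSubgroup V where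
  carrier := {x : V | ∀ α ∈ RS.roots, ∃ n : ℤ, RS.coroot α x = (n : ℚ)}
  zero_mem' := fun α _ => ⟨0, by simp⟩
  add_mem' := by
    rintro x y hx hy α hα
    obtain ⟨n, hn⟩ := hx α hα
    obtain ⟨m, hm⟩ := hy α hα
    exact ⟨n + m, by rw [map_add, hn, hm]; push_cast; ring⟩
  neg_mem' := by
    rintro x hx α hα
    obtain ⟨n, hn⟩ := hx α hα
    exact ⟨-n, by rw [map_neg, hn]; push_cast; ring⟩

end RootSystemData

/-!
A Coxeter element `c = s₁ ⋯ sₙ` satisfies `c x - x = -∑ₖ ⟨sₖ₊₁ ⋯ sₙ x, αₖ^∨⟩ αₖ`; comparing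
coefficients in the basis of simple roots, `c x - x ∈ Q` forces `⟨x, αₖ^∨⟩ ∈ ℤ` for `k = 1, …, n`
in turn. Such an `x` lies in `P`: every positive root is carried to a simple one by simple
reflections lowering its height, and coroots are equivariant, as a positive definite invariant
form shows. Applied to the rational multiples of a fixed vector of `c`, the same integrality shows
that `c` has no nonzero fixed vector, so `c - 1` is invertible.

Given a cocycle `f`, let `c p - p = f c`; then `p ∈ P`. The cocycle `f - dp` vanishes on `⟨c⟩`,
and as `⟨c⟩` is normal, its value at `a` is fixed by `a⁻¹ c a`, hence zero.
-/

section Cocycle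

variable {G M : Type*} [Group G] [AddCommGroup M] [DistribMulAction G M] {f : G → M}

lemma cocycle_zpow_eq_zero (hf : ∀ a b, f (a * b) = f a + a • f b) {c : G} (hc : f c = 0)
    (k : ℤ) : f (c ^ k) = 0 := by
  have h1 : f 1 = 0 := by simpa using hf 1 1
  have hinv : f c⁻¹ = 0 := by
    simpa [h1, hc, smul_eq_zero_iff_eq] using (hf c c⁻¹).symm
  induction k using Int.induction_on with
  | zero => rwa [zpow_zero]
  | succ k ih => rw [zpow_add_one, hf, ih, hc, smul_zero, add_zero]
  | pred k ih => rw [zpow_sub_one, hf, ih, hinv, smul_zero, add_zero]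

lemma cocycle_eq_zero_of_normal_zpowers (hf : ∀ a b, f (a * b) = f a + a • f b) {c : G}
    (hc : f c = 0) (hfix : ∀ x : M, c • x = x → x = 0)
    (hnormal : ∀ a, a * c * a⁻¹ ∈ Subgroup.zpowers c) (a : G) : f a = 0 := by
  obtain ⟨k, hk⟩ := Subgroup.mem_zpowers_iff.1 (hnormal a)
  have hconj : (a * c * a⁻¹) • f a = f a := by
    have hac : a * c = c ^ k * a := by rw [hk]; group
    calc (a * c * a⁻¹) • f a = f (c ^ k * a) := by
          rw [hf, cocycle_zpow_eq_zero hf hc, zero_add, hk]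
      _ = f a := by rw [← hac, hf, hc, smul_zero, add_zero]
  have hfixed : c • a⁻¹ • f a = a⁻¹ • f a := by
    conv_rhs => rw [← hconj]
    simp only [mul_smul, inv_smul_smul]
  exact (smul_eq_zero_iff_eq a⁻¹).1 (hfix _ hfixed)

lemma cocycle_eq_coboundary (hf : ∀ a b, f (a * b) = f a + a • f b) {c : G}
    (hfix : ∀ x : M, c • x = x → x = 0) (hnormal : ∀ a, a * c * a⁻¹ ∈ Subgroup.zpowers c)
    {p : M} (hp : f c = c • p - p) (a : G) : f a = a • p - p := by
  refine sub_eq_zero.1 (cocycle_eq_zero_of_normal_zpowers (f := fun a => f a - (a • p - p))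
    (fun a b => ?_) (sub_eq_zero.2 hp) hfix hnormal a)
  simp only [hf, mul_smul, smul_sub]
  abel

end Cocycle

namespace RootSystemData

variable {V : Type*} [AddCommGroup V] [Module ℚ V] (RS : RootSystemData V)

open Pointwise

lemma refl_apply {α : V} (hα : α ∈ RS.roots) (x : V) :
    RS.refl α hα x = x - RS.coroot α x • α := rfl

lemma refl_refl {α : V} (hα : α ∈ RS.roots) (x : V) : RS.refl α hα (RS.refl α hα x) = x :=
  RS.reflMap_reflMap (RS.coroot_self α hα) x

lemma refl_self {α : V} (hα : α ∈ RS.roots) : RS.refl α hα α = -α := by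
  rw [refl_apply, RS.coroot_self α hα, two_smul]
  abel

lemma neg_mem_roots {α : V} (hα : α ∈ RS.roots) : -α ∈ RS.roots :=
  RS.refl_self hα ▸ RS.reflection_mem α hα α hα

lemma rootLattice_le_weightLattice : RS.rootLattice ≤ RS.weightLattice :=
  (AddSubgroup.closure_le _).2 fun β hβ α hα => RS.crystallographic α hα β hβ

def rootStabilizer : Subgroup (V ≃ₗ[ℚ] V) := MulAction.stabilizer (V ≃ₗ[ℚ] V) RS.roots

lemma apply_mem_roots {g : V ≃ₗ[ℚ] V} (hg : g ∈ RS.rootStabilizer) {α : V} (hα : α ∈ RS.roots) :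
    g α ∈ RS.roots := by
  rw [rootStabilizer, MulAction.mem_stabilizer_iff] at hg
  exact hg ▸ Set.smul_mem_smul_set hα

lemma refl_mem_rootStabilizer {α : V} (hα : α ∈ RS.roots) : RS.refl α hα ∈ RS.rootStabilizer := by
  rw [rootStabilizer, MulAction.mem_stabilizer_iff]
  refine subset_antisymm ?_ fun β hβ => ?_
  · rintro _ ⟨β, hβ, rfl⟩
    exact RS.reflection_mem α hα β hβ
  · exact ⟨_, RS.reflection_mem α hα β hβ, RS.refl_refl hα β⟩

instance : Finite RS.rootStabilizer := by
  have := RS.finite.to_subtype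
  refine Finite.of_injective
    (fun (g : RS.rootStabilizer) (β : RS.roots) =>
      (⟨g.1 β, RS.apply_mem_roots g.2 β.2⟩ : RS.roots))
    fun g h hgh => Subtype.ext (LinearEquiv.toLinearMap_injective ?_)
  exact LinearMap.ext_on RS.span_eq_top fun β hβ => congrArg Subtype.val (congrFun hgh ⟨β, hβ⟩)

noncomputable instance : Fintype RS.rootStabilizer := Fintype.ofFinite _

section InvariantForm

variable [FiniteDimensional ℚ V]

noncomputable def invariantForm : LinearMap.BilinForm ℚ V :=
  ∑ g : RS.rootStabilizer, ∑ i, (LinearMap.mul ℚ ℚ).compl₁₂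
    ((finBasis ℚ V).coord i ∘ₗ g.1.toLinearMap) ((finBasis ℚ V).coord i ∘ₗ g.1.toLinearMap)

lemma invariantForm_apply (x y : V) :
    RS.invariantForm x y =
      ∑ g : RS.rootStabilizer, ∑ i, (finBasis ℚ V).repr (g.1 x) i * (finBasis ℚ V).repr (g.1 y) i := by
  simp [invariantForm]

lemma invariantForm_comm (x y : V) : RS.invariantForm x y = RS.invariantForm y x := by
  simp only [invariantForm_apply, mul_comm]

lemma invariantForm_self_pos {x : V} (hx : x ≠ 0) : 0 < RS.invariantForm x x := by
  obtain ⟨i, hi⟩ := Finsupp.ne_iff.1 ((finBasis ℚ V).repr.map_ne_zero_iff.2 hx)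
  rw [invariantForm_apply]
  exact Finset.sum_pos' (fun g _ => Finset.sum_nonneg fun i _ => mul_self_nonneg _)
    ⟨1, Finset.mem_univ _, Finset.sum_pos' (fun i _ => mul_self_nonneg _)
      ⟨i, Finset.mem_univ _, mul_self_pos.2 hi⟩⟩

lemma invariantForm_apply_apply {g : V ≃ₗ[ℚ] V} (hg : g ∈ RS.rootStabilizer) (x y : V) :
    RS.invariantForm (g x) (g y) = RS.invariantForm x y := by
  simp only [invariantForm_apply]
  refine Fintype.sum_equiv (Equiv.mulRight ⟨g, hg⟩) _ _ fun u => ?_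
  simp only [Equiv.coe_mulRight, Subgroup.coe_mul, LinearEquiv.mul_apply]

lemma invariantForm_root_pos {α : V} (hα : α ∈ RS.roots) : 0 < RS.invariantForm α α :=
  RS.invariantForm_self_pos fun h => RS.zero_not_mem (h ▸ hα)

lemma coroot_eq_div {α : V} (hα : α ∈ RS.roots) (x : V) :
    RS.coroot α x = 2 * RS.invariantForm x α / RS.invariantForm α α := by
  have h := RS.invariantForm_apply_apply (RS.refl_mem_rootStabilizer hα) x α
  rw [refl_self, refl_apply, map_neg, map_sub, map_smul, LinearMap.sub_apply,
    LinearMap.smul_apply, smul_eq_mul, RS.invariantForm_comm α] at h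
  rw [eq_div_iff (RS.invariantForm_root_pos hα).ne']
  linarith

lemma coroot_apply_apply {g : V ≃ₗ[ℚ] V} (hg : g ∈ RS.rootStabilizer) {α : V}
    (hα : α ∈ RS.roots) (x : V) : RS.coroot (g α) (g x) = RS.coroot α x := by
  rw [RS.coroot_eq_div (RS.apply_mem_roots hg hα), RS.coroot_eq_div hα,
    RS.invariantForm_apply_apply hg, RS.invariantForm_apply_apply hg]

lemma coroot_neg {α : V} (hα : α ∈ RS.roots) (x : V) : RS.coroot (-α) x = -RS.coroot α x := by
  rw [RS.coroot_eq_div (RS.neg_mem_roots hα), RS.coroot_eq_div hα]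
  simp only [map_neg, LinearMap.neg_apply, neg_neg]
  ring

lemma eq_zero_of_coroot_eq_zero {S : Set V} (hS : S ⊆ RS.roots)
    (hspan : Submodule.span ℚ S = ⊤) {x : V} (hx : ∀ α ∈ S, RS.coroot α x = 0) : x = 0 := by
  have hform : RS.invariantForm x = 0 := LinearMap.ext_on hspan fun α hα => by
    have h := RS.coroot_eq_div (hS hα) x
    rw [hx α hα, eq_comm, div_eq_zero_iff] at h
    simpa [(RS.invariantForm_root_pos (hS hα)).ne'] using h
  by_contra hx0
  exact (RS.invariantForm_self_pos hx0).ne' (by rw [hform, LinearMap.zero_apply])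

end InvariantForm

section ReflectionProduct

variable {ι : Type*} {v : ι → V} (hv : ∀ i, v i ∈ RS.roots)

def reflProd (l : List ι) : V ≃ₗ[ℚ] V := (l.map fun i => RS.refl (v i) (hv i)).prod

lemma reflProd_cons_apply_sub (i : ι) (l : List ι) (x : V) :
    RS.reflProd hv (i :: l) x - x =
      (RS.reflProd hv l x - x) - RS.coroot (v i) (RS.reflProd hv l x) • v i := by
  rw [reflProd, List.map_cons, List.prod_cons, LinearEquiv.mul_apply, ← reflProd, RS.refl_apply]
  abel

lemma reflProd_apply_sub_mem_span (l : List ι) (x : V) :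
    RS.reflProd hv l x - x ∈ Submodule.span ℚ (v '' {i | i ∈ l}) := by
  induction l with
  | nil => simp [reflProd]
  | cons i l ih =>
    rw [reflProd_cons_apply_sub]
    refine sub_mem (Submodule.span_mono (Set.image_mono fun j hj => ?_) ih)
      (Submodule.smul_mem _ _ (Submodule.subset_span ⟨i, List.mem_cons_self, rfl⟩))
    exact List.mem_cons_of_mem i hj

lemma coroot_int_of_reflProd_apply_sub_mem (hli : LinearIndependent ℚ v) {l : List ι}
    (hl : l.Nodup) {x : V} (hx : RS.reflProd hv l x - x ∈ Submodule.span ℤ (v '' {i | i ∈ l})) :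
    ∀ i ∈ l, ∃ n : ℤ, RS.coroot (v i) x = n := by
  induction l with
  | nil => simp
  | cons i l ih =>
    obtain ⟨hil, hl⟩ := List.nodup_cons.1 hl
    have hset : v '' {j | j ∈ i :: l} = insert (v i) (v '' {j | j ∈ l}) := by
      rw [← Set.image_insert_eq]; congr 1; ext; simp
    rw [reflProd_cons_apply_sub, hset, Submodule.mem_span_insert] at hx
    obtain ⟨m, z, hz, hxz⟩ := hx
    set y := RS.reflProd hv l x
    set k := RS.coroot (v i) y
    replace hxz : y - x = (k + m) • v i + z := by
      rw [sub_eq_iff_eq_add.1 hxz, add_smul, Int.cast_smul_eq_zsmul]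
      abel
    have hcoef : k + m = 0 := by
      by_contra hne
      refine hli.notMem_span_image (s := {j | j ∈ l}) hil ?_
      have hmem : (k + m) • v i ∈ Submodule.span ℚ (v '' {j | j ∈ l}) := by
        rw [eq_sub_of_add_eq hxz.symm]
        exact sub_mem (RS.reflProd_apply_sub_mem_span hv l x)
          (Submodule.span_le_restrictScalars ℤ ℚ _ hz)
      simpa [smul_smul, inv_mul_cancel₀ hne] using Submodule.smul_mem _ (k + m)⁻¹ hmem
    rw [hcoef, zero_smul, zero_add] at hxz
    intro j hj
    rcases List.mem_cons.1 hj with rfl | hj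
    · have hzQ : z ∈ RS.rootLattice := by
        rw [rootLattice, ← Submodule.span_int_eq_addSubgroupClosure]
        exact Submodule.span_mono (by rintro _ ⟨j, -, rfl⟩; exact hv j) hz
      obtain ⟨n, hn⟩ := RS.rootLattice_le_weightLattice hzQ (v j) (hv j)
      refine ⟨-m - n, ?_⟩
      have := map_sub (RS.coroot (v j)) y x
      rw [hxz, hn] at this
      push_cast
      linarith
    · exact ih hl (hxz ▸ hz) j hj

end ReflectionProduct

section

variable {RS}

namespace IsBase

variable {Δ : Finset V} (hΔ : RS.IsBase Δ)
include hΔ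

noncomputable def basis : Basis (Δ : Set V) ℚ V :=
  Basis.mk hΔ.indep (by simp [hΔ.span_eq_top])

lemma basis_apply (i : (Δ : Set V)) : hΔ.basis i = i := Basis.mk_apply _ _ _

lemma basis_repr_coe (i : (Δ : Set V)) : hΔ.basis.repr i = Finsupp.single i 1 := by
  rw [← hΔ.basis_apply, Basis.repr_self]

lemma basis_repr_sum_smul (f : V → ℚ) (i : (Δ : Set V)) :
    hΔ.basis.repr (∑ α ∈ Δ, f α • α) i = f i := by
  have h : ∑ j : (Δ : Set V), f j • (j : V) = ∑ j : (Δ : Set V), f j • hΔ.basis j := by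
    simp only [basis_apply]
  rw [← Finset.sum_finset_coe, h, hΔ.basis.repr_sum_self]

lemma repr_nonneg_or_nonpos {β : V} (hβ : β ∈ RS.roots) :
    (∀ i, 0 ≤ hΔ.basis.repr β i) ∨ (∀ i, hΔ.basis.repr β i ≤ 0) := by
  rcases hΔ.pos_or_neg β hβ with ⟨f, rfl⟩ | ⟨f, rfl⟩
  · exact .inl fun i => by rw [basis_repr_sum_smul]; positivity
  · exact .inr fun i => by
      rw [map_neg, Finsupp.neg_apply, basis_repr_sum_smul, neg_nonpos]; positivity

noncomputable def height : V →ₗ[ℚ] ℚ := ∑ i, hΔ.basis.coord i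

lemma height_apply (x : V) : hΔ.height x = ∑ i, hΔ.basis.repr x i := by
  simp [height]

lemma height_pos {x : V} (hx : x ≠ 0) (hnn : ∀ i, 0 ≤ hΔ.basis.repr x i) : 0 < hΔ.height x := by
  obtain ⟨i, hi⟩ := Finsupp.ne_iff.1 (hΔ.basis.repr.map_ne_zero_iff.2 hx)
  rw [height_apply]
  exact Finset.sum_pos' (fun j _ => hnn j) ⟨i, Finset.mem_univ _, (hnn i).lt_of_ne' hi⟩

lemma height_coe (i : (Δ : Set V)) : hΔ.height i = 1 := by
  rw [height_apply, basis_repr_coe, Finset.sum_eq_single_of_mem i (Finset.mem_univ _)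
    fun j _ hj => Finsupp.single_eq_of_ne hj, Finsupp.single_eq_same]

lemma rootLattice_eq_closure : RS.rootLattice = AddSubgroup.closure (Δ : Set V) := by
  refine le_antisymm ((AddSubgroup.closure_le _).2 fun β hβ => ?_)
    (AddSubgroup.closure_mono hΔ.subset)
  have hsum (f : V → ℕ) : ∑ α ∈ Δ, (f α : ℚ) • α ∈ AddSubgroup.closure (Δ : Set V) :=
    AddSubgroup.sum_mem _ fun α hα => by
      rw [Nat.cast_smul_eq_nsmul]
      exact AddSubgroup.nsmul_mem _ (AddSubgroup.subset_closure hα) _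
  rcases hΔ.pos_or_neg β hβ with ⟨f, rfl⟩ | ⟨f, rfl⟩
  · exact hsum f
  · exact neg_mem (hsum f)

lemma repr_refl_of_ne {i j : (Δ : Set V)} (hji : j ≠ i) (x : V) :
    hΔ.basis.repr (RS.refl i (hΔ.subset i.2) x) j = hΔ.basis.repr x j := by
  rw [RS.refl_apply, map_sub, map_smul, Finsupp.sub_apply, Finsupp.smul_apply, hΔ.basis_repr_coe,
    Finsupp.single_eq_of_ne hji, smul_zero, sub_zero]

lemma repr_refl_nonneg {i : (Δ : Set V)} {γ : V} (hγ : γ ∈ RS.roots) (hγi : γ ≠ i)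
    (hnn : ∀ j, 0 ≤ hΔ.basis.repr γ j) :
    ∀ j, 0 ≤ hΔ.basis.repr (RS.refl i (hΔ.subset i.2) γ) j := by
  have hi := hΔ.subset i.2
  obtain ⟨j, hji, hj⟩ : ∃ j ≠ i, 0 < hΔ.basis.repr γ j := by
    by_contra! h
    have hγ_eq : γ = hΔ.basis.repr γ i • (i : V) := hΔ.basis.ext_elem fun j => by
      rw [map_smul, Finsupp.smul_apply, hΔ.basis_repr_coe]
      rcases eq_or_ne j i with rfl | hji
      · rw [Finsupp.single_eq_same, smul_eq_mul, mul_one]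
      · rw [Finsupp.single_eq_of_ne hji, smul_zero, le_antisymm (h j hji) (hnn j)]
    rcases RS.reduced i hi _ (hγ_eq ▸ hγ) with h1 | h1
    · exact hγi (by rw [hγ_eq, h1, one_smul])
    · linarith [hnn i]
  refine (hΔ.repr_nonneg_or_nonpos (RS.reflection_mem i hi γ hγ)).resolve_right fun h => ?_
  have := h j
  rw [← RS.refl_apply hi, hΔ.repr_refl_of_ne hji] at this
  linarith

variable [FiniteDimensional ℚ V]

lemma exists_coroot_pos {γ : V} (hγ : γ ≠ 0) (hnn : ∀ j, 0 ≤ hΔ.basis.repr γ j) :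
    ∃ i : (Δ : Set V), 0 < RS.coroot i γ := by
  have hsum : RS.invariantForm γ γ = ∑ i, hΔ.basis.repr γ i * RS.invariantForm i γ := by
    calc RS.invariantForm γ γ = RS.invariantForm (∑ i, hΔ.basis.repr γ i • hΔ.basis i) γ := by
          rw [hΔ.basis.sum_repr]
      _ = _ := by simp only [map_sum, map_smul, LinearMap.sum_apply, LinearMap.smul_apply,
          smul_eq_mul, basis_apply]
  obtain ⟨i, -, hi⟩ := Finset.exists_lt_of_sum_lt (s := Finset.univ) (f := 0)
    (g := fun i => hΔ.basis.repr γ i * RS.invariantForm i γ)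
    (by simpa only [Pi.zero_apply, Finset.sum_const_zero, ← hsum]
      using RS.invariantForm_self_pos hγ)
  refine ⟨i, ?_⟩
  have hi_root := hΔ.subset i.2
  rw [RS.coroot_eq_div hi_root, RS.invariantForm_comm]
  exact div_pos (mul_pos two_pos (pos_of_mul_pos_right hi (hnn i)))
    (RS.invariantForm_root_pos hi_root)

lemma coroot_int_of_repr_nonneg (n : ℕ) {γ : V} (hγ : γ ∈ RS.roots)
    (hnn : ∀ j, 0 ≤ hΔ.basis.repr γ j)
    (hht : hΔ.height γ ≤ n) {x : V} (hx : ∀ α ∈ Δ, ∃ m : ℤ, RS.coroot α x = m) :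
    ∃ m : ℤ, RS.coroot γ x = m := by
  have hγ0 : γ ≠ 0 := fun h => RS.zero_not_mem (h ▸ hγ)
  induction n generalizing γ x with
  | zero => exact absurd hht (not_le.2 (by exact_mod_cast hΔ.height_pos hγ0 hnn))
  | succ n ih =>
    by_cases hγΔ : γ ∈ Δ
    · exact hx γ hγΔ
    obtain ⟨i, hi⟩ := hΔ.exists_coroot_pos hγ0 hnn
    have hiR := hΔ.subset i.2
    obtain ⟨k, hk⟩ := RS.crystallographic i hiR γ hγ
    set s := RS.refl i hiR
    have hsγ : s γ ∈ RS.roots := RS.reflection_mem i hiR γ hγ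
    have hsγht : hΔ.height (s γ) ≤ n := by
      have hk1 : (1 : ℚ) ≤ k := by exact_mod_cast (show (0 : ℤ) < k by exact_mod_cast hk ▸ hi)
      rw [RS.refl_apply, map_sub, map_smul, hΔ.height_coe, hk, smul_eq_mul, mul_one]
      push_cast at hht
      linarith
    have hsx : ∀ α ∈ Δ, ∃ m : ℤ, RS.coroot α (s x) = m := fun α hα => by
      obtain ⟨a, ha⟩ := hx α hα
      obtain ⟨b, hb⟩ := hx i i.2
      obtain ⟨c, hc⟩ := RS.crystallographic α (hΔ.subset hα) i hiR
      refine ⟨a - b * c, ?_⟩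
      rw [RS.refl_apply, map_sub, map_smul, ha, hb, hc, smul_eq_mul]
      push_cast
      ring
    have hγx : RS.coroot γ x = RS.coroot (s γ) (s x) := by
      rw [← RS.coroot_apply_apply (RS.refl_mem_rootStabilizer hiR) hsγ, RS.refl_refl, RS.refl_refl]
    rw [hγx]
    exact ih hsγ (hΔ.repr_refl_nonneg hγ (fun h => hγΔ (h ▸ i.2)) hnn) hsγht hsx
      (fun h => RS.zero_not_mem (h ▸ hsγ))

lemma mem_weightLattice_of_coroot_int {x : V} (hx : ∀ α ∈ Δ, ∃ m : ℤ, RS.coroot α x = m) :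
    x ∈ RS.weightLattice := by
  intro β hβ
  rcases hΔ.repr_nonneg_or_nonpos hβ with hnn | hnp
  · exact hΔ.coroot_int_of_repr_nonneg _ hβ hnn (Nat.le_ceil _) hx
  · have hnn : ∀ j, 0 ≤ hΔ.basis.repr (-β) j := fun j => by simpa using hnp j
    obtain ⟨m, hm⟩ := hΔ.coroot_int_of_repr_nonneg _ (RS.neg_mem_roots hβ) hnn (Nat.le_ceil _) hx
    exact ⟨-m, by rw [Int.cast_neg, ← hm, RS.coroot_neg hβ, neg_neg]⟩

end IsBase

namespace IsCoxeterElement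

variable {c : V ≃ₗ[ℚ] V} (hc : RS.IsCoxeterElement c)
include hc

lemma exists_isBase_coroot_int : ∃ Δ, RS.IsBase Δ ∧
    ∀ x, c x - x ∈ RS.rootLattice → ∀ α ∈ Δ, ∃ n : ℤ, RS.coroot α x = n := by
  obtain ⟨Δ, hΔ, l, hnd, hall, rfl⟩ := hc
  refine ⟨Δ, hΔ, fun x hx α hα => ?_⟩
  have hset : Subtype.val '' {i | i ∈ l} = (Δ : Set V) := by
    ext y
    simp [hall]
  rw [hΔ.rootLattice_eq_closure, ← hset, ← Submodule.span_int_eq_addSubgroupClosure] at hx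
  exact RS.coroot_int_of_reflProd_apply_sub_mem (v := Subtype.val) (fun α => hΔ.subset α.2)
    hΔ.indep hnd hx ⟨α, hα⟩ (hall _)

variable [FiniteDimensional ℚ V]

lemma mem_weightLattice {x : V} (hx : c x - x ∈ RS.rootLattice) : x ∈ RS.weightLattice := by
  obtain ⟨Δ, hΔ, h⟩ := hc.exists_isBase_coroot_int
  exact hΔ.mem_weightLattice_of_coroot_int (h x hx)

lemma eq_zero_of_apply_eq {x : V} (hx : c x = x) : x = 0 := by
  obtain ⟨Δ, hΔ, h⟩ := hc.exists_isBase_coroot_int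
  refine RS.eq_zero_of_coroot_eq_zero hΔ.subset hΔ.span_eq_top fun α hα => ?_
  by_contra hne
  -- every `t • x` is fixed, so `t * ⟨x, α^∨⟩ ∈ ℤ` for all `t : ℚ`; take `t = (2 ⟨x, α^∨⟩)⁻¹`
  obtain ⟨n, hn⟩ := h ((2 * RS.coroot α x)⁻¹ • x) (by simp [hx]) α hα
  have : (2 * n : ℤ) = 1 := by
    exact_mod_cast (by rw [← hn, map_smul, smul_eq_mul]; field_simp : (2 * n : ℚ) = 1)
  omega

lemma exists_apply_sub_eq (y : V) : ∃ p : V, c p - p = y := by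
  have hinj : Function.Injective (c.toLinearMap - LinearMap.id : V →ₗ[ℚ] V) := by
    rw [injective_iff_map_eq_zero]
    exact fun x hx => hc.eq_zero_of_apply_eq (sub_eq_zero.1 hx)
  exact LinearMap.injective_iff_surjective.1 hinj y

end IsCoxeterElement

end

end RootSystemData

theorem RootSystemData.h1_rootLattice_to_weightLattice_trivial_general
    {V : Type*} [AddCommGroup V] [Module ℚ V] [FiniteDimensional ℚ V]
    (RS : RootSystemData V)
    (A : Subgroup (V ≃ₗ[ℚ] V))
    (c : V ≃ₗ[ℚ] V) (hc : RS.IsCoxeterElement c) (hcA : c ∈ A)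
    (hnormal : ∀ a ∈ A, a * c * a⁻¹ ∈ Subgroup.zpowers c)
    (f : A → V) (hfQ : ∀ a : A, f a ∈ RS.rootLattice)
    (hcoc : ∀ a b : A, f (a * b) = f a + (a : V ≃ₗ[ℚ] V) (f b)) :
    ∃ p ∈ RS.weightLattice, ∀ a : A, f a = (a : V ≃ₗ[ℚ] V) p - p := by
  obtain ⟨p, hp⟩ := hc.exists_apply_sub_eq (f ⟨c, hcA⟩)
  have hnormalA (a : A) : a * ⟨c, hcA⟩ * a⁻¹ ∈ Subgroup.zpowers ⟨c, hcA⟩ := by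
    obtain ⟨k, hk⟩ := Subgroup.mem_zpowers_iff.1 (hnormal a a.2)
    exact Subgroup.mem_zpowers_iff.2 ⟨k, Subtype.ext (by simpa using hk)⟩
  exact ⟨p, hc.mem_weightLattice (hp ▸ hfQ _),
    cocycle_eq_coboundary hcoc (fun x hx => hc.eq_zero_of_apply_eq hx) hnormalA hp.symm⟩

/-- Assume the root system is irreducible. Let `A ≤ GL(V)` map the set of
roots into itself (hence preserve `Q` and `P`), contain a Coxeter element `c` of the Weyl
group, and suppose the cyclic subgroup generated by `c` is normal in `A`.  Then the map
`H¹(A, Q) → H¹(A, P)` induced by the inclusion `Q ↪ P` is zero: every `1`-cocycle of `A`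
with values in the root lattice `Q` becomes, with values in the weight lattice `P`, a
coboundary. -/
theorem RootSystemData.h1_rootLattice_to_weightLattice_trivial
    {V : Type*} [AddCommGroup V] [Module ℚ V] [FiniteDimensional ℚ V]
    (RS : RootSystemData V) (hirr : RS.IsIrreducible)
    (A : Subgroup (V ≃ₗ[ℚ] V))
    (hA : ∀ a ∈ A, ∀ α ∈ RS.roots, a α ∈ RS.roots)
    (c : V ≃ₗ[ℚ] V) (hc : RS.IsCoxeterElement c) (hcA : c ∈ A)
    (hnormal : ∀ a ∈ A, a * c * a⁻¹ ∈ Subgroup.zpowers c)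
    (f : A → V) (hfQ : ∀ a : A, f a ∈ RS.rootLattice)
    (hcoc : ∀ a b : A, f (a * b) = f a + (a : V ≃ₗ[ℚ] V) (f b)) :
    ∃ p ∈ RS.weightLattice, ∀ a : A, f a = (a : V ≃ₗ[ℚ] V) p - p :=
  RootSystemData.h1_rootLattice_to_weightLattice_trivial_general RS A c hc hcA hnormal f hfQ hcoc
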